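/- arXiv:1501.05563 — 4 statements merged into one kernel-verified Lean document; each statement's English description precedes it below -/
import Mathlib

section
/- (Theorem 1) Let λ > 0, ν > 0, G > 0, and let μ_B and μ_S be probability measures on [0,∞) with finite means b₁ and s₁, and suppose ρ := λ b₁ < 1. Define β(z) = ∫₀^∞ e^{−λ(1−z)t} dμ_B(t), σ(z) = ∫₀^∞ e^{−λ(1−z)t} dμ_S(t), f(z) = (1 − e^{−νG}) β(z) + e^{−νG} z, and K(z) = σ(z) e^{−λ(1−β(z))G}. Suppose X : [0,1] → ℝ is continuous at 1, satisfies X(1) = 1, and satisfies the functional equation X(z) = K(z) X(f(z)) for all z ∈ [0,1]. Then for every z ∈ [0,1] the infinite product ∏_{j=0}^∞ K(f⁽ʲ⁾(z)) converges and X(z) = ∏_{j=0}^∞ K(f⁽ʲ⁾(z)), where f⁽⁰⁾(z) = z and f⁽ʲ⁾(z) = f(f⁽ʲ⁻¹⁾(z)). -/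
/-!
Write `I = [0, 1]`, `e = exp(-νG)` and `ρ = λ b₁`. On `I` the transforms `β` and `σ` take values
in `I`, hence so do `f` and `K`, and `exp x ≥ 1 + x` gives `1 - β w ≤ ρ (1 - w)`. Since
`1 - f w = (1 - e)(1 - β w) + e (1 - w)`, the map `f` contracts the distance to `1` by the factor
`q = e + (1 - e) ρ < 1`, so `f⁽ⁿ⁾ z → 1` geometrically. Iterating the functional equation gives
`X z = (∏_{j<n} K (f⁽ʲ⁾ z)) · X (f⁽ⁿ⁾ z)`; the partial products of factors in `I` decrease to the
infinite product, and `X (f⁽ⁿ⁾ z) → X 1 = 1` by continuity of `X` at `1`.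
-/

open MeasureTheory Filter Set Topology

section ExpMoment

variable {μ : Measure ℝ} {c : ℝ}

lemma integrable_exp_mul_of_nonpos [IsFiniteMeasure μ] (hμ : ∀ᵐ t ∂μ, 0 ≤ t) (hc : c ≤ 0) :
    Integrable (fun t => Real.exp (c * t)) μ := by
  refine (integrable_const (1 : ℝ)).mono' (by fun_prop) ?_
  filter_upwards [hμ] with t ht
  rw [Real.norm_eq_abs, abs_of_pos (Real.exp_pos _), Real.exp_le_one_iff]
  exact mul_nonpos_of_nonpos_of_nonneg hc ht

variable [IsProbabilityMeasure μ]

lemma integral_exp_mul_mem_Icc (hμ : ∀ᵐ t ∂μ, 0 ≤ t) (hc : c ≤ 0) :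
    ∫ t, Real.exp (c * t) ∂μ ∈ Icc (0 : ℝ) 1 := by
  refine ⟨integral_nonneg fun _ => (Real.exp_pos _).le, ?_⟩
  have h := integral_mono_ae (integrable_exp_mul_of_nonpos hμ hc) (integrable_const (1 : ℝ)) <| by
    filter_upwards [hμ] with t ht
    exact Real.exp_le_one_iff.2 (mul_nonpos_of_nonpos_of_nonneg hc ht)
  simpa using h

lemma one_add_mul_integral_le_integral_exp_mul (hμ : ∀ᵐ t ∂μ, 0 ≤ t)
    (hint : Integrable (fun t : ℝ => t) μ) (hc : c ≤ 0) :
    1 + c * ∫ t, t ∂μ ≤ ∫ t, Real.exp (c * t) ∂μ := by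
  have hlin : ∫ t, (1 + c * t) ∂μ = 1 + c * ∫ t, t ∂μ := by
    rw [integral_add (integrable_const _) (hint.const_mul c), integral_const, integral_const_mul]
    simp
  rw [← hlin]
  exact integral_mono ((integrable_const _).add (hint.const_mul c))
    (integrable_exp_mul_of_nonpos hμ hc) fun t => by linarith [Real.add_one_le_exp (c * t)]

end ExpMoment

lemma Real.multipliable_of_nonneg_of_le_one {ι : Type*} {g : ι → ℝ} (h₀ : ∀ i, 0 ≤ g i)
    (h₁ : ∀ i, g i ≤ 1) : Multipliable g :=
  ⟨_, tendsto_atTop_ciInf (Finset.prod_anti_set_of_le_one h₀ h₁)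
    ⟨0, forall_mem_range.2 fun _ => Finset.prod_nonneg fun i _ => h₀ i⟩⟩

section Iteration

variable {s : Set ℝ} {f : ℝ → ℝ} {q : ℝ}

lemma one_sub_iterate_le_pow_mul (hf : MapsTo f s s) (hq : 0 ≤ q)
    (hcontr : ∀ w ∈ s, 1 - f w ≤ q * (1 - w)) {z : ℝ} (hz : z ∈ s) (n : ℕ) :
    1 - f^[n] z ≤ q ^ n * (1 - z) := by
  induction n with
  | zero => simp
  | succ n ih =>
    calc 1 - f^[n + 1] z = 1 - f (f^[n] z) := by rw [Function.iterate_succ_apply']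
      _ ≤ q * (1 - f^[n] z) := hcontr _ (hf.iterate n hz)
      _ ≤ q * (q ^ n * (1 - z)) := mul_le_mul_of_nonneg_left ih hq
      _ = q ^ (n + 1) * (1 - z) := by ring

lemma tendsto_iterate_nhdsWithin_one (hs : ∀ w ∈ s, w ≤ 1) (hf : MapsTo f s s) (hq₀ : 0 ≤ q)
    (hq₁ : q < 1) (hcontr : ∀ w ∈ s, 1 - f w ≤ q * (1 - w)) {z : ℝ} (hz : z ∈ s) :
    Tendsto (fun n => f^[n] z) atTop (𝓝[s] 1) := by
  have hgeom : Tendsto (fun n => q ^ n * (1 - z)) atTop (𝓝 0) := by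
    simpa using (tendsto_pow_atTop_nhds_zero_of_lt_one hq₀ hq₁).mul_const (1 - z)
  have hgap : Tendsto (fun n => 1 - f^[n] z) atTop (𝓝 0) :=
    squeeze_zero (fun n => sub_nonneg.2 (hs _ (hf.iterate n hz)))
      (one_sub_iterate_le_pow_mul hf hq₀ hcontr hz) hgeom
  refine tendsto_nhdsWithin_iff.2 ⟨?_, Eventually.of_forall fun n => hf.iterate n hz⟩
  simpa using (tendsto_const_nhds (x := (1 : ℝ))).sub hgap

end Iteration

section FunctionalEquation

variable {α M : Type*} [CommMonoid M] {s : Set α} {f : α → α} {K X : α → M}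

lemma eq_prod_range_mul_iterate (hf : MapsTo f s s) (hX : ∀ z ∈ s, X z = K z * X (f z))
    {z : α} (hz : z ∈ s) (n : ℕ) :
    X z = (∏ j ∈ Finset.range n, K (f^[j] z)) * X (f^[n] z) := by
  induction n with
  | zero => simp
  | succ n ih =>
    rw [ih, Finset.prod_range_succ, mul_assoc, Function.iterate_succ_apply',
      ← hX _ (hf.iterate n hz)]

lemma eq_tprod_of_eq_mul_comp [TopologicalSpace α] [TopologicalSpace M] [ContinuousMul M]
    [T2Space M] {a z : α} (hf : MapsTo f s s) (hX : ∀ z ∈ s, X z = K z * X (f z)) (hz : z ∈ s)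
    (hK : Multipliable fun j => K (f^[j] z)) (hlim : Tendsto (fun n => f^[n] z) atTop (𝓝[s] a))
    (hXa : ContinuousWithinAt X s a) (hXa₁ : X a = 1) :
    X z = ∏' j, K (f^[j] z) := by
  have h := hK.hasProd.tendsto_prod_nat.mul (hXa₁ ▸ hXa.tendsto.comp hlim)
  rw [mul_one] at h
  exact tendsto_const_nhds_iff.1 <| h.congr fun n => (eq_prod_range_mul_iterate hf hX hz n).symm

end FunctionalEquation

theorem stationary_gf_infinite_product_general
    (lam ν G : ℝ) (hlam : 0 < lam) (hν : 0 < ν) (hG : 0 < G)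
    (μB μS : Measure ℝ) [IsProbabilityMeasure μB] [IsProbabilityMeasure μS]
    (hsuppB : ∀ᵐ t ∂μB, 0 ≤ t) (hsuppS : ∀ᵐ t ∂μS, 0 ≤ t)
    (hintB : Integrable (fun t : ℝ => t) μB)
    (b₁ : ℝ) (hb₁ : b₁ = ∫ t, t ∂μB)
    (hρ : lam * b₁ < 1)
    (β σ f K : ℝ → ℝ)
    (hβ : ∀ z : ℝ, β z = ∫ t, Real.exp (-lam * (1 - z) * t) ∂μB)
    (hσ : ∀ z : ℝ, σ z = ∫ t, Real.exp (-lam * (1 - z) * t) ∂μS)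
    (hf : ∀ z : ℝ, f z = (1 - Real.exp (-ν * G)) * β z + Real.exp (-ν * G) * z)
    (hK : ∀ z : ℝ, K z = σ z * Real.exp (-lam * (1 - β z) * G))
    (X : ℝ → ℝ)
    (hXcont : ContinuousWithinAt X (Icc (0:ℝ) 1) 1)
    (hX1 : X 1 = 1)
    (hXeq : ∀ z ∈ Icc (0:ℝ) 1, X z = K z * X (f z)) :
    ∀ z ∈ Icc (0:ℝ) 1,
      (Multipliable fun j : ℕ => K (f^[j] z)) ∧
      X z = ∏' j : ℕ, K (f^[j] z) := by
  intro z hz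
  have hρ₀ : 0 ≤ lam * b₁ := mul_nonneg hlam.le (hb₁ ▸ integral_nonneg_of_ae hsuppB)
  have he : Real.exp (-ν * G) < 1 := Real.exp_lt_one_iff.2 (by nlinarith)
  have he₀ := Real.exp_pos (-ν * G)
  have hcoef : ∀ w ∈ Icc (0 : ℝ) 1, -lam * (1 - w) ≤ 0 := fun w hw => by nlinarith [hw.2]
  have hβI : ∀ w ∈ Icc (0 : ℝ) 1, β w ∈ Icc (0 : ℝ) 1 := fun w hw =>
    hβ w ▸ integral_exp_mul_mem_Icc hsuppB (hcoef w hw)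
  have hβ_lower : ∀ w ∈ Icc (0 : ℝ) 1, 1 - β w ≤ lam * b₁ * (1 - w) := fun w hw => by
    have := one_add_mul_integral_le_integral_exp_mul hsuppB hintB (hcoef w hw)
    rw [← hb₁, ← hβ] at this
    linarith
  have hfI : MapsTo f (Icc 0 1) (Icc 0 1) := fun w hw => by
    obtain ⟨hβ₀, hβ₁⟩ := hβI w hw
    rw [hf]
    constructor <;> nlinarith [hw.1, hw.2]
  have hcontr : ∀ w ∈ Icc (0 : ℝ) 1,
      1 - f w ≤ (Real.exp (-ν * G) + (1 - Real.exp (-ν * G)) * (lam * b₁)) * (1 - w) :=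
    fun w hw => by nlinarith [hf w, hβ_lower w hw]
  have hKI : ∀ w ∈ Icc (0 : ℝ) 1, K w ∈ Icc (0 : ℝ) 1 := fun w hw => by
    obtain ⟨hσ₀, hσ₁⟩ := hσ w ▸ integral_exp_mul_mem_Icc hsuppS (hcoef w hw)
    have hexp : Real.exp (-lam * (1 - β w) * G) ≤ 1 :=
      Real.exp_le_one_iff.2 (by
        nlinarith [mul_nonneg (mul_nonneg hlam.le (sub_nonneg.2 (hβI w hw).2)) hG.le])
    rw [hK]
    exact ⟨mul_nonneg hσ₀ (Real.exp_pos _).le, mul_le_one₀ hσ₁ (Real.exp_pos _).le hexp⟩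
  have hmul : Multipliable fun j => K (f^[j] z) := Real.multipliable_of_nonneg_of_le_one
    (fun j => (hKI _ (hfI.iterate j hz)).1) (fun j => (hKI _ (hfI.iterate j hz)).2)
  refine ⟨hmul, eq_tprod_of_eq_mul_comp hfI hXeq hz hmul ?_ hXcont hX1⟩
  exact tendsto_iterate_nhdsWithin_one (fun w hw => hw.2) hfI (by positivity) (by nlinarith)
    hcontr hz

/-- Theorem 1: If `ρ = λ b₁ < 1`, the generating function `X` of
the stationary number of customers in orbit at the beginning of a glue period,
which satisfies `X z = K z · X (f z)`, is given by the infinite product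
`X z = ∏_{j=0}^∞ K (f⁽ʲ⁾ z)`. -/
theorem stationary_gf_infinite_product
    (lam ν G : ℝ) (hlam : 0 < lam) (hν : 0 < ν) (hG : 0 < G)
    (μB μS : Measure ℝ) [IsProbabilityMeasure μB] [IsProbabilityMeasure μS]
    (hsuppB : ∀ᵐ t ∂μB, 0 ≤ t) (hsuppS : ∀ᵐ t ∂μS, 0 ≤ t)
    (hintB : Integrable (fun t : ℝ => t) μB)
    (hintS : Integrable (fun t : ℝ => t) μS)
    (b₁ s₁ : ℝ) (hb₁ : b₁ = ∫ t, t ∂μB) (hs₁ : s₁ = ∫ t, t ∂μS)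
    (hρ : lam * b₁ < 1)
    (β σ f K : ℝ → ℝ)
    (hβ : ∀ z : ℝ, β z = ∫ t, Real.exp (-lam * (1 - z) * t) ∂μB)
    (hσ : ∀ z : ℝ, σ z = ∫ t, Real.exp (-lam * (1 - z) * t) ∂μS)
    (hf : ∀ z : ℝ, f z = (1 - Real.exp (-ν * G)) * β z + Real.exp (-ν * G) * z)
    (hK : ∀ z : ℝ, K z = σ z * Real.exp (-lam * (1 - β z) * G))
    (X : ℝ → ℝ)
    (hXcont : ContinuousWithinAt X (Icc (0:ℝ) 1) 1)
    (hX1 : X 1 = 1)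
    (hXeq : ∀ z ∈ Icc (0:ℝ) 1, X z = K z * X (f z)) :
    ∀ z ∈ Icc (0:ℝ) 1,
      (Multipliable fun j : ℕ => K (f^[j] z)) ∧
      X z = ∏' j : ℕ, K (f^[j] z) :=
  stationary_gf_infinite_product_general lam ν G hlam hν hG μB μS hsuppB hsuppS hintB b₁ hb₁ hρ β σ
    f K hβ hσ hf hK X hXcont hX1 hXeq
end

section
/- Let λ > 0, ν > 0, b₁ > 0, b₂ ≥ 0, s₁ > 0, s₂ ≥ 0 with ρ := λ b₁ ∈ (0,1), and for G > 0 define R(G) = ρ + λ² b₂/(2(1−ρ)) + λ(G² + 2 G s₁ + s₂)/(2(G + s₁)) + λ ρ (G + s₁)/(1−ρ) + λ(ρ G + s₁) e^{−νG}/((1−ρ)(1−e^{−νG})). Then G · R(G) → λ s₁ / (ν (1−ρ)) as G → 0⁺; in other words, R(G) is asymptotically equivalent to λ s₁ / (G ν (1−ρ)) as G ↓ 0. -/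
/-!
All summands of `R(G)` but the last stay bounded as `G ↓ 0`, so they contribute nothing to
`G · R(G)` in the limit. The last one is `B(G) / (1 - e^{-νG})` with `B` continuous, and
`1 - e^{-νG} ~ νG` because `ν` is the derivative of `G ↦ 1 - e^{-νG}` at `0`; hence
`G · R(G) → B(0) / ν = λ s₁ / (ν (1 - ρ))`.
-/

open Filter Topology Real

theorem tendsto_one_sub_exp_neg_mul_div (ν : ℝ) :
    Tendsto (fun x => (1 - exp (-ν * x)) / x) (𝓝[≠] 0) (𝓝 ν) := by
  have hderiv : HasDerivAt (fun x => 1 - exp (-ν * x)) ν 0 := by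
    simpa using ((hasDerivAt_id (0 : ℝ)).const_mul (-ν)).exp.const_sub 1
  refine hderiv.tendsto_slope_zero.congr fun x => ?_
  simp only [zero_add, mul_zero, exp_zero, sub_self, sub_zero, smul_eq_mul]
  exact inv_mul_eq_div x _

theorem tendsto_mul_div_one_sub_exp_neg_mul {g : ℝ → ℝ} {ν : ℝ} (hν : ν ≠ 0)
    (hg : ContinuousAt g 0) :
    Tendsto (fun x => g x * (x / (1 - exp (-ν * x)))) (𝓝[≠] 0) (𝓝 (g 0 / ν)) := by
  refine (hg.tendsto.mono_left nhdsWithin_le_nhds).mul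
    ((tendsto_one_sub_exp_neg_mul_div ν).inv₀ hν) |>.congr fun x => ?_
  rw [inv_div]

theorem mean_number_small_glue_asymptotics_general
    (lam ν b₂ s₁ s₂ ρ : ℝ)
    (hν : 0 < ν)
    (hs₁ : 0 < s₁)
    (R : ℝ → ℝ)
    (hR : ∀ G : ℝ, 0 < G →
      R G = ρ + lam ^ 2 * b₂ / (2 * (1 - ρ))
            + lam * (G ^ 2 + 2 * G * s₁ + s₂) / (2 * (G + s₁))
            + lam * ρ * (G + s₁) / (1 - ρ)
            + lam * (ρ * G + s₁) * Real.exp (-ν * G)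
              / ((1 - ρ) * (1 - Real.exp (-ν * G)))) :
    Tendsto (fun G : ℝ => G * R G) (nhdsWithin 0 (Set.Ioi 0))
      (nhds (lam * s₁ / (ν * (1 - ρ)))) := by
  set A : ℝ → ℝ := fun G => ρ + lam ^ 2 * b₂ / (2 * (1 - ρ))
    + lam * (G ^ 2 + 2 * G * s₁ + s₂) / (2 * (G + s₁)) + lam * ρ * (G + s₁) / (1 - ρ)
  set B : ℝ → ℝ := fun G => lam * (ρ * G + s₁) * exp (-ν * G) / (1 - ρ)
  have hA : ContinuousAt A 0 := by
    have : 2 * ((0 : ℝ) + s₁) ≠ 0 := by positivity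
    fun_prop (disch := assumption)
  have hB : ContinuousAt B 0 := by fun_prop
  have hbounded_part : Tendsto (fun G => G * A G) (𝓝[≠] 0) (𝓝 0) := by
    have hcont : ContinuousAt (fun G => G * A G) 0 := continuousAt_id.mul hA
    simpa using hcont.tendsto.mono_left nhdsWithin_le_nhds
  have hlim := (hbounded_part.add (tendsto_mul_div_one_sub_exp_neg_mul hν.ne' hB)).mono_left
    (nhdsGT_le_nhdsNE 0)
  have hB0 : 0 + B 0 / ν = lam * s₁ / (ν * (1 - ρ)) := by
    simp only [B, mul_zero, zero_add, exp_zero, mul_one]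
    rw [div_div, mul_comm (1 - ρ)]
  rw [hB0] at hlim
  refine hlim.congr' <| eventually_nhdsWithin_of_forall fun G hG => ?_
  simp only [hR G hG, A, B, div_eq_mul_inv, mul_inv]
  ring

/-- As `G ↓ 0`, the closed-form mean queue length `R(G)` of the
single retrial queue with vacations and glue periods satisfies
`G · R(G) → λ s₁ / (ν (1-ρ))`, i.e. `R(G) ~ λ s₁ / (G ν (1-ρ))`. -/
theorem mean_number_small_glue_asymptotics
    (lam ν b₁ b₂ s₁ s₂ ρ : ℝ)
    (hlam : 0 < lam) (hν : 0 < ν)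
    (hb₁ : 0 < b₁) (hb₂ : 0 ≤ b₂) (hs₁ : 0 < s₁) (hs₂ : 0 ≤ s₂)
    (hρdef : ρ = lam * b₁) (hρ0 : 0 < ρ) (hρ1 : ρ < 1)
    (R : ℝ → ℝ)
    (hR : ∀ G : ℝ, 0 < G →
      R G = ρ + lam ^ 2 * b₂ / (2 * (1 - ρ))
            + lam * (G ^ 2 + 2 * G * s₁ + s₂) / (2 * (G + s₁))
            + lam * ρ * (G + s₁) / (1 - ρ)
            + lam * (ρ * G + s₁) * Real.exp (-ν * G)
              / ((1 - ρ) * (1 - Real.exp (-ν * G)))) :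
    Tendsto (fun G : ℝ => G * R G) (nhdsWithin 0 (Set.Ioi 0))
      (nhds (lam * s₁ / (ν * (1 - ρ)))) :=
  mean_number_small_glue_asymptotics_general lam ν b₂ s₁ s₂ ρ hν hs₁ R hR
end

section
/- Let λ > 0, ν > 0, b₁ > 0, b₂ ≥ 0, s₁ ≥ 0, s₂ ≥ s₁² with ρ := λ b₁ ∈ (0,1), and suppose s₁ > 0 or restrict to G > 0. Then the function R : (0,∞) → ℝ given by R(G) = ρ + λ² b₂/(2(1−ρ)) + λ(G² + 2 G s₁ + s₂)/(2(G + s₁)) + λ ρ (G + s₁)/(1−ρ) + λ(ρ G + s₁) e^{−νG}/((1−ρ)(1−e^{−νG})) is convex on (0,∞). -/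
/-!
Since `(G² + 2Gs₁ + s₂) / (2(G + s₁)) = (G + s₁)/2 + (s₂ - s₁²) / (2(G + s₁))` and
`e^{-νG} / (1 - e^{-νG}) = 1 / (e^{νG} - 1)`, `R` is an affine function of `G`, plus a
nonnegative multiple of `1 / (G + s₁)`, plus `(aG + c) / (e^{νG} - 1)` with `a, c ≥ 0`.
After rescaling to `ν = 1`, the second derivative of the last term is
`e^x (a((x - 2)e^x + x + 2) + c(e^x + 1)) / (e^x - 1)³`, which is nonnegative for `x > 0`
because `(x - 2)e^x + x + 2` vanishes at `0` and is nondecreasing.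
-/

open Real Set

theorem sub_two_mul_exp_add_add_two_nonneg {x : ℝ} (hx : 0 ≤ x) :
    0 ≤ (x - 2) * exp x + x + 2 := by
  have hmono : Monotone fun y => (y - 2) * exp y + y + 2 := by
    refine monotone_of_hasDerivAt_nonneg
      (fun y => ((((hasDerivAt_id' y).sub_const 2).mul (hasDerivAt_exp y)).add
        (hasDerivAt_id' y)).add_const 2) fun y => ?_
    -- `(1 - y) e^y ≤ e^{-y} e^y = 1`
    have h := mul_le_mul_of_nonneg_right (add_one_le_exp (-y)) (exp_pos y).le
    rw [← exp_add, neg_add_cancel, exp_zero] at h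
    simp only [Pi.zero_apply]
    linarith
  simpa using hmono hx

theorem convexOn_linear_div_exp_sub_one {a c : ℝ} (ha : 0 ≤ a) (hc : 0 ≤ c) :
    ConvexOn ℝ (Ioi 0) fun x => (a * x + c) / (exp x - 1) := by
  have hE : ∀ x ∈ Ioi (0 : ℝ), 0 < exp x - 1 := fun x hx => sub_pos.2 (one_lt_exp_iff.2 hx)
  have hlin (x : ℝ) := ((hasDerivAt_id' x).const_mul a).add_const c
  have hexp (x : ℝ) := (hasDerivAt_exp x).sub_const 1
  refine convexOn_of_hasDerivWithinAt2_nonneg (convex_Ioi 0)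
    (f' := fun x => (a * (exp x - 1) - (a * x + c) * exp x) / (exp x - 1) ^ 2)
    (f'' := fun x => exp x * (a * ((x - 2) * exp x + x + 2) + c * (exp x + 1)) / (exp x - 1) ^ 3)
    (ContinuousOn.div (by fun_prop) (by fun_prop) fun x hx => (hE x hx).ne')
    (fun x hx => ?_) (fun x hx => ?_) (fun x hx => ?_) <;> rw [interior_Ioi] at hx
  · refine ((hlin x).fun_div (hexp x) (hE x hx).ne').hasDerivWithinAt.congr_deriv ?_
    ring
  · refine (((hexp x).const_mul a).fun_sub ((hlin x).fun_mul (hasDerivAt_exp x))).fun_div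
      ((hexp x).fun_pow 2) (pow_ne_zero 2 (hE x hx).ne') |>.hasDerivWithinAt.congr_deriv ?_
    have := (hE x hx).ne'
    field_simp
    ring
  · have := hE x hx
    have := sub_two_mul_exp_add_add_two_nonneg hx.out.le
    positivity

theorem convexOn_linear_div_exp_mul_sub_one {ν a c : ℝ} (hν : 0 < ν) (ha : 0 ≤ a)
    (hc : 0 ≤ c) :
    ConvexOn ℝ (Ioi 0) fun x => (a * x + c) / (exp (ν * x) - 1) := by
  refine ((convexOn_linear_div_exp_sub_one (div_nonneg ha hν.le) hc).comp_linearMap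
    (LinearMap.mul ℝ ℝ ν)).subset (fun x hx => mul_pos hν hx) (convex_Ioi 0) |>.congr
    fun x _ => ?_
  simp only [Function.comp_apply, LinearMap.mul_apply']
  field_simp

theorem convexOn_const_div_add_const {k t : ℝ} (hk : 0 ≤ k) (ht : 0 ≤ t) :
    ConvexOn ℝ (Ioi 0) fun x => k / (x + t) := by
  refine (((convexOn_zpow (-1)).translate_right t).subset
    (fun x (hx : 0 < x) => show 0 < t + x by linarith) (convex_Ioi 0)).smul hk |>.congr
    fun x _ => ?_
  simp [div_eq_mul_inv, add_comm]

theorem mean_number_convex_in_glue_general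
    (lam ν b₂ s₁ s₂ ρ : ℝ)
    (hlam : 0 < lam) (hν : 0 < ν)
    (hs₁ : 0 ≤ s₁) (hs₂ : s₁ ^ 2 ≤ s₂)
    (hρ0 : 0 < ρ) (hρ1 : ρ < 1) :
    ConvexOn ℝ (Set.Ioi (0:ℝ))
      (fun G : ℝ =>
        ρ + lam ^ 2 * b₂ / (2 * (1 - ρ))
          + lam * (G ^ 2 + 2 * G * s₁ + s₂) / (2 * (G + s₁))
          + lam * ρ * (G + s₁) / (1 - ρ)
          + lam * (ρ * G + s₁) * Real.exp (-ν * G)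
            / ((1 - ρ) * (1 - Real.exp (-ν * G)))) := by
  have h1ρ : 0 < 1 - ρ := sub_pos.2 hρ1
  have hs : 0 ≤ s₂ - s₁ ^ 2 := sub_nonneg.2 hs₂
  have hconvex : ConvexOn ℝ (Ioi 0)
      ((fun G => ρ + lam ^ 2 * b₂ / (2 * (1 - ρ)) + lam * s₁ / 2 + lam * ρ * s₁ / (1 - ρ)
          + (lam / 2 + lam * ρ / (1 - ρ)) • id G)
        + (fun G => lam * (s₂ - s₁ ^ 2) / 2 / (G + s₁))
        + fun G => (lam * ρ / (1 - ρ) * G + lam * s₁ / (1 - ρ)) / (exp (ν * G) - 1)) :=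
    (((convexOn_const _ (convex_Ioi 0)).add ((convexOn_id (convex_Ioi 0)).smul (by positivity))).add
      (convexOn_const_div_add_const (by positivity) hs₁)).add
      (convexOn_linear_div_exp_mul_sub_one hν (by positivity) (by positivity))
  refine hconvex.congr fun G (hG : 0 < G) => ?_
  have hE : exp (ν * G) - 1 ≠ 0 := (sub_pos.2 (one_lt_exp_iff.2 (mul_pos hν hG))).ne'
  have hGs : G + s₁ ≠ 0 := by positivity
  simp only [Pi.add_apply, smul_eq_mul, id, neg_mul, exp_neg]
  field_simp
  ring

/-- The closed-form stationary mean number of customers `R(G)`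
in the single retrial queue with vacations and glue periods is a convex
function of the glue period length `G` on `(0,∞)`. -/
theorem mean_number_convex_in_glue
    (lam ν b₁ b₂ s₁ s₂ ρ : ℝ)
    (hlam : 0 < lam) (hν : 0 < ν)
    (hb₁ : 0 < b₁) (hb₂ : 0 ≤ b₂) (hs₁ : 0 ≤ s₁) (hs₂ : s₁ ^ 2 ≤ s₂)
    (hρdef : ρ = lam * b₁) (hρ0 : 0 < ρ) (hρ1 : ρ < 1) :
    ConvexOn ℝ (Set.Ioi (0:ℝ))
      (fun G : ℝ =>
        ρ + lam ^ 2 * b₂ / (2 * (1 - ρ))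
          + lam * (G ^ 2 + 2 * G * s₁ + s₂) / (2 * (G + s₁))
          + lam * ρ * (G + s₁) / (1 - ρ)
          + lam * (ρ * G + s₁) * Real.exp (-ν * G)
            / ((1 - ρ) * (1 - Real.exp (-ν * G)))) :=
  mean_number_convex_in_glue_general lam ν b₂ s₁ s₂ ρ hlam hν hs₁ hs₂ hρ0 hρ1
end

section
/- Let N ≥ 1 and for i = 1,…,N let λ_i > 0, s_i ≥ 0, G_i > 0, b_i > 0, u_i ∈ (0,1), and set ρ_i = λ_i b_i with ρ := ∑_k ρ_k < 1. Suppose real numbers x_j^{(i)} (for i, j = 1,…,N, indices of i cyclic modulo N) satisfy for every i: x_i^{(i+1)} = λ_i s_i + λ_i ρ_i G_i + (ρ_i(1 − u_i) + u_i) x_i^{(i)}, and for every j ≠ i: x_j^{(i+1)} = λ_j s_i + λ_j (1 + ρ_i) G_i + λ_j b_i (1 − u_i) x_i^{(i)} + x_j^{(i)}. Then for every i, x_i^{(i)} = (λ_i/(1 − u_i)) · ( (∑_{j=1}^N (s_j + G_j))/(1 − ρ) − G_i ). -/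
open Finset

/-!
Going once around the cycle of stations, the orbit content of each type returns to its
starting value, so the increments of `x · j` sum to zero. Type `j` gains `λ_j` times a
station-`m` quantity at every step `m`, and only at its own station also loses
`λ_j G_j + (1 - u_j) x_j^{(j)}`; hence `(1 - u_j) x_j^{(j)} = λ_j (C - G_j)` with a single
cycle constant `C`. Substituting this back into `C` gives `C = ∑ (s_m + G_m) + ρ C`,
i.e. `C = ∑ (s_m + G_m) / (1 - ρ)`.
-/

theorem sum_sub_comp_add_right_eq_zero {ι M : Type*} [AddGroup ι] [Fintype ι]
    [AddCommGroup M] (f : ι → M) (c : ι) : ∑ m, (f (m + c) - f m) = 0 := by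
  rw [sum_sub_distrib, sub_eq_zero]
  exact Equiv.sum_comp (Equiv.addRight c) f

theorem eq_sum_of_cyclic_increments {ι : Type*} [AddGroup ι] [Fintype ι] [DecidableEq ι]
    {y a : ι → ℝ} {c j : ι} {d : ℝ}
    (hy : ∀ m, y (m + c) - y m = a m - if m = j then d else 0) :
    d = ∑ m, a m := by
  have h := sum_sub_comp_add_right_eq_zero y c
  simp only [hy, sum_sub_distrib, sum_ite_eq', mem_univ, if_true] at h
  linarith

theorem polling_diag_balance (N : ℕ) [NeZero N] (lam s G b u : Fin N → ℝ)
    (x : Fin N → Fin N → ℝ)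
    (hdiag : ∀ i : Fin N,
      x (i + 1) i = lam i * s i + lam i * (lam i * b i) * G i
        + ((lam i * b i) * (1 - u i) + u i) * x i i)
    (hoff : ∀ i j : Fin N, j ≠ i →
      x (i + 1) j = lam j * s i + lam j * (1 + lam i * b i) * G i
        + lam j * b i * (1 - u i) * x i i + x i j)
    (j : Fin N) :
    (1 - u j) * x j j =
      lam j * (∑ m, (s m + (1 + lam m * b m) * G m + b m * (1 - u m) * x m m) - G j) := by
  have hbal : lam j * G j + (1 - u j) * x j j =
      ∑ m, lam j * (s m + (1 + lam m * b m) * G m + b m * (1 - u m) * x m m) := by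
    refine eq_sum_of_cyclic_increments (y := fun i => x i j) (c := 1) (j := j) fun m => ?_
    by_cases hm : m = j
    · subst hm
      rw [if_pos rfl, hdiag m]
      ring
    · rw [if_neg hm, hoff m j (Ne.symm hm)]
      ring
  rw [← mul_sum] at hbal
  linear_combination hbal

theorem polling_orbit_first_moments_general
    (N : ℕ) [NeZero N]
    (lam s G b u : Fin N → ℝ)
    (hu : ∀ i, 0 < u i ∧ u i < 1)
    (hρ : ∑ k, lam k * b k < 1)
    (x : Fin N → Fin N → ℝ)
    (hdiag : ∀ i : Fin N,
      x (i + 1) i = lam i * s i + lam i * (lam i * b i) * G i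
        + ((lam i * b i) * (1 - u i) + u i) * x i i)
    (hoff : ∀ i j : Fin N, j ≠ i →
      x (i + 1) j = lam j * s i + lam j * (1 + lam i * b i) * G i
        + lam j * b i * (1 - u i) * x i i + x i j) :
    ∀ i : Fin N,
      x i i = (lam i / (1 - u i))
        * ((∑ j, (s j + G j)) / (1 - ∑ k, lam k * b k) - G i) := by
  intro i
  set C := ∑ m, (s m + (1 + lam m * b m) * G m + b m * (1 - u m) * x m m) with hC
  have hbal := polling_diag_balance N lam s G b u x hdiag hoff
  have hfix : C = ∑ j, (s j + G j) + (∑ k, lam k * b k) * C := by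
    conv_lhs => rw [hC]
    rw [sum_mul, ← sum_add_distrib]
    refine sum_congr rfl fun m _ => ?_
    linear_combination b m * hbal m
  have hCval : C = (∑ j, (s j + G j)) / (1 - ∑ k, lam k * b k) := by
    rw [eq_div_iff (by linarith)]
    linarith
  have hu1 : 1 - u i ≠ 0 := by linarith [(hu i).2]
  rw [← hCval, div_mul_eq_mul_div, eq_div_iff hu1]
  linear_combination hbal i

/-- The solution of the cyclic first-moment balance equations of
the N-queue polling model with retrials and glue periods: the mean number of
type-`i` customers in orbit at the start of a glue period of station `i`
equals `(λ_i/(1-u_i)) ((∑_j (s_j + G_j))/(1-ρ) - G_i)`.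
Here `x i j` denotes `x_j^{(i)}`, the mean number of type-`j` customers in
orbit at the start of a glue period of station `i`. -/
theorem polling_orbit_first_moments
    (N : ℕ) [NeZero N] (hN : 1 ≤ N)
    (lam s G b u : Fin N → ℝ)
    (hlam : ∀ i, 0 < lam i) (hs : ∀ i, 0 ≤ s i) (hG : ∀ i, 0 < G i)
    (hb : ∀ i, 0 < b i) (hu : ∀ i, 0 < u i ∧ u i < 1)
    (hρ : ∑ k, lam k * b k < 1)
    (x : Fin N → Fin N → ℝ)
    (hdiag : ∀ i : Fin N,
      x (i + 1) i = lam i * s i + lam i * (lam i * b i) * G i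
        + ((lam i * b i) * (1 - u i) + u i) * x i i)
    (hoff : ∀ i j : Fin N, j ≠ i →
      x (i + 1) j = lam j * s i + lam j * (1 + lam i * b i) * G i
        + lam j * b i * (1 - u i) * x i i + x i j) :
    ∀ i : Fin N,
      x i i = (lam i / (1 - u i))
        * ((∑ j, (s j + G j)) / (1 - ∑ k, lam k * b k) - G i) :=
  polling_orbit_first_moments_general N lam s G b u hu hρ x hdiag hoff
end
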